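/- Let η be a Borel probability measure on ℝ with cumulative distribution function F and quantile function F⁻¹(u) := inf{x ∈ ℝ : F(x) ≥ u}. For each n ≥ 1 define the quantile-midpoint empirical distribution function F_n(x) := (1/n) · #{ i ∈ {1, …, n} : F⁻¹((i − 1/2)/n) ≤ x }. Then for every n ≥ 1 and every x ∈ ℝ, |F_n(x) − F(x)| ≤ 1/n. Consequently the discrete measures η_n := (1/n) Σ_{i=1}^n δ_{F⁻¹((i−1/2)/n)} converge weakly to η as n → ∞. -/

import Mathlib

open MeasureTheory Filter

noncomputable section

/-- The cumulative distribution function of a measure on `ℝ`. -/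
def cdfOf (η : Measure ℝ) (x : ℝ) : ℝ := (η (Set.Iic x)).toReal

/-- The quantile function `F⁻¹(u) = inf {x : F x ≥ u}`. -/
def quantileOf (η : Measure ℝ) (u : ℝ) : ℝ := sInf {x : ℝ | u ≤ cdfOf η x}

/-- The quantile-midpoint empirical distribution function
`F_n(x) = (1/n) #{i ∈ {1,…,n} : F⁻¹((i − 1/2)/n) ≤ x}`. -/
def quantileMidpointEDF (η : Measure ℝ) (n : ℕ) (x : ℝ) : ℝ :=
  (((Finset.range n).filter
      fun i : ℕ => quantileOf η (((i : ℝ) + 1 / 2) / n) ≤ x).card : ℝ) / n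

/-- The discrete quantile-midpoint measure `η_n = (1/n) Σ_{i=1}^n δ_{F⁻¹((i−1/2)/n)}`. -/
def quantileMidpointMeasure (η : Measure ℝ) (n : ℕ) : Measure ℝ :=
  ((n : ENNReal))⁻¹ •
    ∑ i ∈ Finset.range n, Measure.dirac (quantileOf η (((i : ℝ) + 1 / 2) / n))

/-!
For `0 < u < 1` the quantile satisfies `F⁻¹(u) ≤ x ↔ u ≤ F(x)`, so the `i`-th midpoint quantile
lies in `(-∞, x]` exactly when `i + 1/2 ≤ n F(x)`. Hence `n F_n(x) = ⌊n F(x) + 1/2⌋` is the integer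
nearest to `n F(x)`, and `|F_n(x) - F(x)| ≤ 1/(2n)`. Convergence of the distribution functions at
every point gives convergence on half-open intervals; these form a π-system containing arbitrarily
small neighbourhoods of every point, which suffices for weak convergence by the portmanteau
theorem.
-/

open Set Topology ProbabilityTheory
open scoped Finset ENNReal

theorem StieltjesFunction.csInf_setOf_le_le_iff (F : StieltjesFunction ℝ) {u x : ℝ}
    (hbdd : BddBelow {y | u ≤ F y}) (hne : {y | u ≤ F y}.Nonempty) :
    sInf {y | u ≤ F y} ≤ x ↔ u ≤ F x := by
  set s := sInf {y | u ≤ F y}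
  refine ⟨fun hsx => ?_, fun hx => csInf_le hbdd hx⟩
  suffices u ≤ F s from this.trans (F.mono hsx)
  have hright : Tendsto F (𝓝[>] s) (𝓝 (F s)) :=
    (F.right_continuous s).mono Ioi_subset_Ici_self
  refine ge_of_tendsto hright (eventually_nhdsWithin_of_forall fun y hy => ?_)
  obtain ⟨z, hz, hzy⟩ := exists_lt_of_csInf_lt hne hy
  exact hz.trans (F.mono hzy.le)

lemma card_filter_range_add_half_le_eq_natFloor (n : ℕ) {t : ℝ} (ht : t ≤ n) :
    #{i ∈ Finset.range n | ((i : ℕ) : ℝ) + 1 / 2 ≤ t} = ⌊t + 1 / 2⌋₊ := by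
  rw [← Finset.card_range ⌊t + 1 / 2⌋₊]
  congr 1
  ext i
  have hi : i < ⌊t + 1 / 2⌋₊ ↔ (i : ℝ) + 1 / 2 ≤ t := by
    rw [Nat.lt_iff_add_one_le, Nat.le_floor_iff' i.succ_ne_zero]
    push_cast
    constructor <;> intro <;> linarith
  rw [Finset.mem_filter, Finset.mem_range, Finset.mem_range, hi]
  exact ⟨And.right, fun h => ⟨by exact_mod_cast (by linarith : (i : ℝ) < n), h⟩⟩

lemma abs_natFloor_add_half_sub_le {t : ℝ} (ht : 0 ≤ t + 1 / 2) :
    |(⌊t + 1 / 2⌋₊ : ℝ) - t| ≤ 1 / 2 := by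
  have h₁ := Nat.floor_le ht
  have h₂ := Nat.lt_floor_add_one (t + 1 / 2)
  rw [abs_le]; constructor <;> linarith

open scoped Classical in
lemma MeasureTheory.Measure.inv_natCast_smul_sum_dirac_apply {α : Type*} [MeasurableSpace α]
    (n : ℕ) (p : ℕ → α) {s : Set α} (hs : MeasurableSet s) :
    ((n : ℝ≥0∞)⁻¹ • ∑ i ∈ Finset.range n, Measure.dirac (p i)) s
      = #{i ∈ Finset.range n | p i ∈ s} / n := by
  rw [Measure.smul_apply, Measure.finsetSum_apply, smul_eq_mul, ENNReal.div_eq_inv_mul]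
  simp only [Measure.dirac_apply' _ hs, Set.indicator_apply, Pi.one_apply, Finset.sum_boole]

lemma ProbabilityTheory.measure_Ioc_eq_ofReal_cdf_sub (μ : Measure ℝ) [IsProbabilityMeasure μ]
    (a b : ℝ) : μ (Ioc a b) = ENNReal.ofReal (cdf μ b - cdf μ a) := by
  conv_lhs => rw [← measure_cdf μ]
  exact (cdf μ).measure_Ioc a b

lemma MeasureTheory.ProbabilityMeasure.tendsto_of_tendsto_cdf {ι : Type*} {l : Filter ι}
    [l.IsCountablyGenerated] {μ : ι → ProbabilityMeasure ℝ} {ν : ProbabilityMeasure ℝ}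
    (h : ∀ x, Tendsto (fun i => cdf (μ i) x) l (𝓝 (cdf ν x))) :
    Tendsto μ l (𝓝 ν) := by
  refine (isPiSystem_Ioc id id).tendsto_probabilityMeasure_of_tendsto_of_mem ?_ ?_ ?_
  · rintro _ ⟨a, b, -, rfl⟩
    exact measurableSet_Ioc
  · intro u hu x hx
    obtain ⟨a, b, hxab, hsub⟩ := mem_nhds_iff_exists_Ioo_subset.mp (hu.mem_nhds hx)
    obtain ⟨c, hxc, hcb⟩ := exists_between hxab.2
    exact ⟨Ioc a c, ⟨a, c, hxab.1.trans hxc, rfl⟩, Ioc_mem_nhds hxab.1 hxc,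
      (Ioc_subset_Ioo_right hcb).trans hsub⟩
  · rintro _ ⟨a, b, -, rfl⟩
    rw [← ENNReal.tendsto_coe]
    simp only [ProbabilityMeasure.ennreal_coeFn_eq_coeFn_toMeasure,
      measure_Ioc_eq_ofReal_cdf_sub]
    exact ENNReal.tendsto_ofReal ((h b).sub (h a))

section Quantile

variable (μ : Measure ℝ) [IsProbabilityMeasure μ]

lemma cdfOf_eq_cdf : cdfOf μ = cdf μ :=
  funext fun x => (cdf_eq_real μ x).symm

lemma quantileOf_le_iff {u x : ℝ} (hu₀ : 0 < u) (hu₁ : u < 1) :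
    quantileOf μ u ≤ x ↔ u ≤ cdfOf μ x := by
  rw [quantileOf, cdfOf_eq_cdf]
  refine (cdf μ).csInf_setOf_le_le_iff ?_ ?_
  · obtain ⟨y, hy⟩ :=
      ((tendsto_cdf_atBot μ).eventually (eventually_lt_nhds hu₀)).exists_forall_of_atBot
    exact ⟨y, fun z hz => not_lt.mp fun hzy => (hy z hzy.le).not_ge hz⟩
  · exact ((tendsto_cdf_atTop μ).eventually (eventually_ge_nhds hu₁)).exists

end Quantile

section QuantileMidpoint

variable (η : Measure ℝ) [IsProbabilityMeasure η] {n : ℕ}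

lemma quantileMidpointEDF_eq_natFloor (hn : n ≠ 0) (x : ℝ) :
    quantileMidpointEDF η n x = ⌊n * cdfOf η x + 1 / 2⌋₊ / n := by
  have hn₀ : (0 : ℝ) < n := by positivity
  have hF₁ : cdfOf η x ≤ 1 := by rw [cdfOf_eq_cdf]; exact cdf_le_one η x
  rw [quantileMidpointEDF, ← card_filter_range_add_half_le_eq_natFloor n (by nlinarith)]
  congr 3
  refine Finset.filter_congr fun i hi => ?_
  have hi : (i : ℝ) + 1 / 2 < n := by
    have : (i : ℝ) + 1 ≤ n := by exact_mod_cast Finset.mem_range.mp hi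
    linarith
  rw [quantileOf_le_iff η (by positivity) ((div_lt_one hn₀).mpr hi), div_le_iff₀ hn₀,
    mul_comm]

lemma abs_quantileMidpointEDF_sub_cdfOf_le (hn : n ≠ 0) (x : ℝ) :
    |quantileMidpointEDF η n x - cdfOf η x| ≤ 1 / (2 * n) := by
  have hn₀ : (0 : ℝ) < n := by positivity
  have hF₀ : 0 ≤ cdfOf η x := ENNReal.toReal_nonneg
  calc |quantileMidpointEDF η n x - cdfOf η x|
      = |(⌊n * cdfOf η x + 1 / 2⌋₊ : ℝ) - n * cdfOf η x| / n := by
        rw [quantileMidpointEDF_eq_natFloor η hn, ← abs_of_pos hn₀, ← abs_div,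
          abs_of_pos hn₀, sub_div, mul_div_cancel_left₀ _ hn₀.ne']
    _ ≤ 1 / 2 / n := by gcongr; exact abs_natFloor_add_half_sub_le (by positivity)
    _ = 1 / (2 * n) := by ring

lemma tendsto_quantileMidpointEDF (x : ℝ) :
    Tendsto (fun n => quantileMidpointEDF η n x) atTop (𝓝 (cdfOf η x)) := by
  rw [tendsto_iff_norm_sub_tendsto_zero]
  refine squeeze_zero' (Eventually.of_forall fun _ => norm_nonneg _) ?_
    ((tendsto_const_div_atTop_nhds_zero_nat (1 / 2)).congr fun n => div_div 1 2 (n : ℝ))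
  filter_upwards [eventually_ne_atTop 0] with n hn
  exact abs_quantileMidpointEDF_sub_cdfOf_le η hn x

end QuantileMidpoint

lemma quantileMidpointMeasure_real_Iic (η : Measure ℝ) (n : ℕ) (x : ℝ) :
    (quantileMidpointMeasure η n).real (Iic x) = quantileMidpointEDF η n x := by
  rw [measureReal_def, quantileMidpointMeasure,
    Measure.inv_natCast_smul_sum_dirac_apply _ _ measurableSet_Iic, ENNReal.toReal_div,
    quantileMidpointEDF]
  simp only [ENNReal.toReal_natCast, Set.mem_Iic]

lemma isProbabilityMeasure_quantileMidpointMeasure (η : Measure ℝ) {n : ℕ} (hn : n ≠ 0) :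
    IsProbabilityMeasure (quantileMidpointMeasure η n) := by
  constructor
  rw [quantileMidpointMeasure, Measure.inv_natCast_smul_sum_dirac_apply _ _ MeasurableSet.univ]
  simp only [Set.mem_univ, Finset.filter_true, Finset.card_range]
  exact ENNReal.div_self (by exact_mod_cast hn) (ENNReal.natCast_ne_top n)

/-- The quantile-midpoint empirical CDF is uniformly within `1/n` of the true CDF, and
consequently the quantile-midpoint measures converge weakly to `η`. -/
theorem quantileMidpoint_cdf_close_and_weak_conv (η : Measure ℝ) [IsProbabilityMeasure η] :
    (∀ n : ℕ, 1 ≤ n → ∀ x : ℝ,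
        |quantileMidpointEDF η n x - cdfOf η x| ≤ 1 / n) ∧
      (∀ f : BoundedContinuousFunction ℝ ℝ,
        Tendsto (fun n : ℕ => ∫ x, f x ∂(quantileMidpointMeasure η n)) atTop
          (nhds (∫ x, f x ∂η))) := by
  refine ⟨fun n hn x => ?_, fun f => ?_⟩
  · refine (abs_quantileMidpointEDF_sub_cdfOf_le η (by omega) x).trans ?_
    gcongr
    linarith [Nat.cast_nonneg (α := ℝ) n]
  · -- `quantileMidpointMeasure η 0 = 0`, so the probability measures start at `n = 1`.
    let μ : ℕ → ProbabilityMeasure ℝ := fun n =>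
      ⟨quantileMidpointMeasure η (n + 1),
        isProbabilityMeasure_quantileMidpointMeasure η n.succ_ne_zero⟩
    have hcdf (x : ℝ) : Tendsto (fun n => cdf (μ n) x) atTop (𝓝 (cdf η x)) := by
      rw [← cdfOf_eq_cdf]
      refine ((tendsto_add_atTop_iff_nat 1).mpr (tendsto_quantileMidpointEDF η x)).congr
        fun n => ?_
      rw [cdf_eq_real]
      exact (quantileMidpointMeasure_real_Iic η _ x).symm
    have hconv : Tendsto μ atTop (𝓝 ⟨η, ‹_›⟩) :=
      ProbabilityMeasure.tendsto_of_tendsto_cdf hcdf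
    exact (tendsto_add_atTop_iff_nat 1).mp
      (ProbabilityMeasure.tendsto_iff_forall_integral_tendsto.mp hconv f)

end
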